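/- arXiv:2307.13555 — 3 statements merged into one kernel-verified Lean document; each statement's English description precedes it below -/
import Mathlib

section
/- Let V be a finite-dimensional vector space over ℂ, let D ∈ End(V) be diagonalizable, let N₀ ∈ End(V) be nilpotent, and let (Nᵢ)_{i≥1} be endomorphisms of V such that D commutes with N₀ and with every Nᵢ. Suppose (Fₙ)_{n≥0} is a sequence in End(V) with F₀ = id satisfying, for every n ≥ 0, ad(D)F_{n+1} + (n·id + ad(N₀))Fₙ + ∑_{i=1}^{n} ad(Nᵢ)F_{n−i} = 0, where ad(A)F := AF − FA. Then Fₙ = 0 for all n ≥ 1. -/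
/-!
Induct on `n`. Once `F₁ = ⋯ = Fₙ = 0`, the relation at `n` says that `F_{n+1}` commutes with
`D`, and the relation at `n + 1` reads `ad(D) F_{n+2} + Y = 0` with
`Y = ((n + 1) + ad(N₀)) F_{n+1}`. Since `D` commutes with `N₀` and `F_{n+1}`, `Y` lies in
`ker ad(D) ∩ im ad(D)`, which is zero because `ad(D)` is semisimple; and `(n + 1) + ad(N₀)` is
invertible because `ad(N₀)` is nilpotent.
-/

/-- An endomorphism of a vector space is diagonalizable if the eigenspaces span. -/
def IsDiagonalizable {K V : Type*} [Field K] [AddCommGroup V] [Module K V]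
    (D : Module.End K V) : Prop :=
  (⨆ μ : K, D.eigenspace μ) = ⊤

open Polynomial

attribute [local instance] LieRing.ofAssociativeRing

theorem IsDiagonalizable.isSemisimple {K V : Type*} [Field K] [AddCommGroup V] [Module K V]
    [FiniteDimensional K V] {D : Module.End K V} (hD : IsDiagonalizable D) : D.IsSemisimple := by
  classical
  refine Module.End.isSemisimple_of_squarefree_aeval_eq_zero
    (p := ∏ μ : D.Eigenvalues, (X - C (μ : K)))
    (separable_prod_X_sub_C_iff'.mpr fun _ _ _ _ h => Subtype.ext h).squarefree ?_
  rw [← LinearMap.ker_eq_top, eq_top_iff, ← hD]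
  refine iSup_le fun μ v hv => ?_
  rcases eq_or_ne v 0 with rfl | hv0
  · exact zero_mem _
  have hμ : D.HasEigenvalue μ := Module.End.hasEigenvalue_of_hasEigenvector ⟨hv, hv0⟩
  rw [LinearMap.mem_ker, Module.End.aeval_apply_of_hasEigenvector ⟨hv, hv0⟩, eval_prod,
    Finset.prod_eq_zero (Finset.mem_univ ⟨μ, hμ⟩) (by simp), zero_smul]

theorem Module.End.IsSemisimple.disjoint_ker_range {R M : Type*} [CommRing R] [AddCommGroup M]
    [Module R M] {f : Module.End R M} (hf : f.IsSemisimple) :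
    Disjoint (LinearMap.ker f) (LinearMap.range f) := by
  obtain ⟨q, hq, hcompl⟩ := Module.End.isSemisimple_iff.mp hf (LinearMap.ker f)
    (fun x hx => by simp_all)
  have hrange : LinearMap.range f ≤ q := by
    rintro _ ⟨x, rfl⟩
    obtain ⟨a, ha, b, hb, rfl⟩ :=
      Submodule.mem_sup.mp (hcompl.sup_eq_top ▸ Submodule.mem_top (x := x))
    rw [map_add, LinearMap.mem_ker.mp ha, zero_add]
    exact hq hb
  exact hcompl.disjoint.mono_right hrange

theorem Module.End.eq_zero_of_smul_add_apply_eq_zero {K M : Type*} [Field K] [AddCommGroup M]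
    [Module K M] {T : Module.End K M} (hT : IsNilpotent T) {c : K} (hc : c ≠ 0) {x : M}
    (h : c • x + T x = 0) : x = 0 := by
  have hunit : IsUnit (algebraMap K (Module.End K M) c + T) :=
    hT.isUnit_add_left_of_commute ((Ne.isUnit hc).map _) (Algebra.commute_algebraMap_right _ _)
  exact ((Module.End.isUnit_iff _).mp hunit).injective (by simpa using h)

theorem Module.End.eq_zero_of_commute_of_commutator_add_eq_zero {K V : Type*} [Field K]
    [PerfectField K] [AddCommGroup V] [Module K V] [FiniteDimensional K V]
    {D N₀ X Z : Module.End K V} (hD : D.IsSemisimple) (hN₀ : IsNilpotent N₀)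
    (hDN₀ : Commute D N₀) (hDX : Commute D X) {c : K} (hc : c ≠ 0)
    (h : (D * Z - Z * D) + (c • X + (N₀ * X - X * N₀)) = 0) : X = 0 := by
  set ad := LieAlgebra.ad K (Module.End K V)
  set Y := c • X + ad N₀ X
  have hY_ker : Y ∈ LinearMap.ker (ad D) :=
    sub_eq_zero.mpr <| (hDX.smul_right c).add_right <|
      (hDN₀.mul_right hDX).sub_right (hDX.mul_right hDN₀)
  have hY_range : Y ∈ LinearMap.range (ad D) :=
    ⟨-Z, by rw [map_neg]; exact neg_eq_of_add_eq_zero_right h⟩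
  have hY : Y = 0 := Submodule.disjoint_def.mp
    (LieAlgebra.ad_isSemisimple_of_isSemisimple hD).disjoint_ker_range Y hY_ker hY_range
  exact eq_zero_of_smul_add_apply_eq_zero (LieAlgebra.ad_nilpotent_of_nilpotent hN₀) hc hY

section Vanishing

variable {R : Type*} [Ring R] {F : ℕ → R} {n : ℕ}

theorem commutator_eq_zero_of_vanishing (hF0 : F 0 = 1)
    (hvan : ∀ k, 1 ≤ k → k ≤ n → F k = 0) (A : R) {k : ℕ} (hk : k ≤ n) :
    A * F k - F k * A = 0 := by
  rcases k.eq_zero_or_pos with rfl | hk0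
  · simp [hF0]
  · simp [hvan k hk0 hk]

theorem sum_commutator_eq_zero_of_vanishing (hF0 : F 0 = 1)
    (hvan : ∀ k, 1 ≤ k → k ≤ n → F k = 0) (N : ℕ → R) {m : ℕ} (hm : m ≤ n + 1) :
    ∑ i ∈ Finset.Icc 1 m, (N i * F (m - i) - F (m - i) * N i) = 0 :=
  Finset.sum_eq_zero fun i hi => commutator_eq_zero_of_vanishing hF0 hvan _ (by grind)

end Vanishing

theorem flat_endomorphism_rigidity_general
    {V : Type*} [AddCommGroup V] [Module ℂ V] [FiniteDimensional ℂ V]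
    (D N₀ : Module.End ℂ V) (N : ℕ → Module.End ℂ V)
    (hD : IsDiagonalizable D) (hN₀ : IsNilpotent N₀)
    (hDN₀ : D * N₀ = N₀ * D)
    (F : ℕ → Module.End ℂ V) (hF0 : F 0 = 1)
    (hrec : ∀ n : ℕ,
      (D * F (n + 1) - F (n + 1) * D) +
        ((n : ℂ) • F n + (N₀ * F n - F n * N₀)) +
        ∑ i ∈ Finset.Icc 1 n, (N i * F (n - i) - F (n - i) * N i) = 0) :
    ∀ n : ℕ, 1 ≤ n → F n = 0 := by
  have hstep : ∀ n, (∀ k, 1 ≤ k → k ≤ n → F k = 0) → F (n + 1) = 0 := by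
    intro n hvan
    have hsmul : (n : ℂ) • F n = 0 := by
      rcases n.eq_zero_or_pos with rfl | hn
      · simp
      · simp [hvan n hn le_rfl]
    have hDF : D * F (n + 1) = F (n + 1) * D := by
      simpa [hsmul, commutator_eq_zero_of_vanishing hF0 hvan N₀ le_rfl,
        sum_commutator_eq_zero_of_vanishing hF0 hvan N n.le_succ, sub_eq_zero] using hrec n
    refine Module.End.eq_zero_of_commute_of_commutator_add_eq_zero hD.isSemisimple hN₀ hDN₀ hDF
      (Nat.cast_add_one_ne_zero n) (Z := F (n + 2)) ?_
    simpa [sum_commutator_eq_zero_of_vanishing hF0 hvan N le_rfl] using hrec (n + 1)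
  intro n hn
  induction n using Nat.strong_induction_on with
  | _ n ih =>
    obtain ⟨m, rfl⟩ := Nat.exists_eq_add_of_le' hn
    exact hstep m fun k hk1 hk2 => ih k (by omega) hk1

theorem flat_endomorphism_rigidity
    {V : Type*} [AddCommGroup V] [Module ℂ V] [FiniteDimensional ℂ V]
    (D N₀ : Module.End ℂ V) (N : ℕ → Module.End ℂ V)
    (hD : IsDiagonalizable D) (hN₀ : IsNilpotent N₀)
    (hDN₀ : D * N₀ = N₀ * D) (hDN : ∀ i, D * N i = N i * D)
    (F : ℕ → Module.End ℂ V) (hF0 : F 0 = 1)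
    (hrec : ∀ n : ℕ,
      (D * F (n + 1) - F (n + 1) * D) +
        ((n : ℂ) • F n + (N₀ * F n - F n * N₀)) +
        ∑ i ∈ Finset.Icc 1 n, (N i * F (n - i) - F (n - i) * N i) = 0) :
    ∀ n : ℕ, 1 ≤ n → F n = 0 :=
  flat_endomorphism_rigidity_general D N₀ N hD hN₀ hDN₀ F hF0 hrec
end

section
/- Let k ≥ 1 be an integer, let z < 0 be a real number, and define g : (0,∞) → ℝ by g(S) = e^{S/z} · ∑_{i=0}^{k−1} (−1)^i · ((k−1)!/(k−1−i)!) · S^{−i−1} z^i. Then g solves the differential equation z·S·g'(S) + k·z·g(S) = e^{S/z} for all S > 0. -/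
/-!
Write `k = m + 1` and `g(S) = e^{S/z} F(S)` with `F = ∑_{i ≤ m} T_i`,
`T_i(S) = (-1)^i m^{\underline{i}} z^i S^{-i-1}`. Then
`z S g' + k z g = e^{S/z} (S F + z S F' + k z F)`, and since `S T_i' = -(i+1) T_i` and
`S T_{i+1} = -(m-i) z T_i`, the bracket telescopes to `S T_0 - S T_{m+1} = 1 - 0`.
-/

/-- The explicit solution `g(S) = e^{S/z} ∑_{i=0}^{k-1} (-1)^i ((k-1)!/(k-1-i)!) S^{-i-1} z^i`
of the Mellin–Barnes differential equation. -/
noncomputable def mellinBarnesSolution (k : ℕ) (z : ℝ) (S : ℝ) : ℝ :=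
  Real.exp (S / z) *
    ∑ i ∈ Finset.range k,
      (-1 : ℝ) ^ i * ((Nat.factorial (k - 1) / Nat.factorial (k - 1 - i) : ℕ) : ℝ) *
        S ^ (-(i : ℤ) - 1) * z ^ i

open Finset Real

theorem hasDerivAt_exp_div_mul {z S F' : ℝ} {F : ℝ → ℝ} (hF : HasDerivAt F F' S) :
    HasDerivAt (fun x => exp (x / z) * F x) (exp (S / z) * (F S / z + F')) S := by
  have hexp : HasDerivAt (fun x => exp (x / z)) (exp (S / z) * (1 / z)) S :=
    ((hasDerivAt_id S).div_const z).exp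
  exact (hexp.fun_mul hF).congr_deriv (by ring)

/-- The summand `T_i` of `mellinBarnesSolution (m + 1) z`, with the natural-number quotient
`m! / (m - i)!` replaced by the falling factorial; the two agree for `i ≤ m`. -/
noncomputable def mellinBarnesTerm (m : ℕ) (z : ℝ) (i : ℕ) (S : ℝ) : ℝ :=
  (-1) ^ i * m.descFactorial i * z ^ i * S ^ (-(i : ℤ) - 1)

section

variable (m : ℕ) (z : ℝ)

theorem mellinBarnesSolution_succ_eq_sum :
    mellinBarnesSolution (m + 1) z =
      fun S => exp (S / z) * ∑ i ∈ range (m + 1), mellinBarnesTerm m z i S := by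
  funext S
  rw [mellinBarnesSolution, Nat.add_sub_cancel]
  congr 1
  refine sum_congr rfl fun i hi => ?_
  rw [← Nat.descFactorial_eq_div (Nat.lt_succ_iff.mp (mem_range.mp hi)), mellinBarnesTerm]
  ring

theorem hasDerivAt_mellinBarnesTerm (i : ℕ) {S : ℝ} (hS : S ≠ 0) :
    HasDerivAt (mellinBarnesTerm m z i) (-(i + 1) * mellinBarnesTerm m z i S / S) S := by
  refine ((hasDerivAt_zpow (-(i : ℤ) - 1) S (Or.inl hS)).const_mul
    ((-1) ^ i * m.descFactorial i * z ^ i : ℝ)).congr_deriv ?_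
  rw [mellinBarnesTerm, zpow_sub_one₀ hS]
  push_cast
  ring

theorem mul_mellinBarnesTerm_succ (i : ℕ) {S : ℝ} (hS : S ≠ 0) :
    S * mellinBarnesTerm m z (i + 1) S = -(m - i) * z * mellinBarnesTerm m z i S := by
  rcases le_or_gt i m with him | hmi
  · have hsub : ((m - i : ℕ) : ℝ) = m - i := Nat.cast_sub him
    have hpow : S ^ (-((i + 1 : ℕ) : ℤ) - 1) = S ^ (-(i : ℤ) - 1) / S := by
      rw [div_eq_mul_inv, ← zpow_sub_one₀ hS]
      push_cast
      ring_nf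
    rw [mellinBarnesTerm, mellinBarnesTerm, hpow, Nat.descFactorial_succ, Nat.cast_mul, hsub]
    field_simp
    ring
  · simp [mellinBarnesTerm, Nat.descFactorial_of_lt hmi]

theorem mul_mellinBarnesTerm_zero {S : ℝ} (hS : S ≠ 0) : S * mellinBarnesTerm m z 0 S = 1 := by
  simp [mellinBarnesTerm, hS]

theorem mellinBarnesTerm_succ_self (S : ℝ) : mellinBarnesTerm m z (m + 1) S = 0 := by
  simp [mellinBarnesTerm]

theorem mellinBarnesTerm_sum_telescope {S : ℝ} (hS : S ≠ 0) :
    S * ∑ i ∈ range (m + 1), mellinBarnesTerm m z i S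
      + z * S * ∑ i ∈ range (m + 1), -(i + 1) * mellinBarnesTerm m z i S / S
      + (m + 1) * z * ∑ i ∈ range (m + 1), mellinBarnesTerm m z i S = 1 := by
  have hstep : ∀ i : ℕ, S * mellinBarnesTerm m z i S
      + z * S * (-(i + 1) * mellinBarnesTerm m z i S / S) + (m + 1) * z * mellinBarnesTerm m z i S
      = S * mellinBarnesTerm m z i S - S * mellinBarnesTerm m z (i + 1) S := by
    intro i
    rw [mul_mellinBarnesTerm_succ m z i hS]
    field_simp
    ring
  simp only [mul_sum, ← sum_add_distrib, hstep]
  rw [sum_range_sub', mul_mellinBarnesTerm_zero m z hS, mellinBarnesTerm_succ_self m z S, mul_zero,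
    sub_zero]

end

theorem mellinBarnesSolution_solves_ODE (k : ℕ) (hk : 1 ≤ k) (z : ℝ) (hz : z < 0) :
    ∀ S : ℝ, 0 < S → ∃ g' : ℝ,
      HasDerivAt (mellinBarnesSolution k z) g' S ∧
      z * S * g' + (k : ℝ) * z * mellinBarnesSolution k z S = Real.exp (S / z) := by
  intro S hS
  obtain ⟨m, rfl⟩ := Nat.exists_eq_add_of_le' hk
  have hF := HasDerivAt.fun_sum fun i (_ : i ∈ range (m + 1)) =>
    hasDerivAt_mellinBarnesTerm m z i hS.ne'
  refine ⟨_, mellinBarnesSolution_succ_eq_sum m z ▸ hasDerivAt_exp_div_mul hF, ?_⟩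
  rw [mellinBarnesSolution_succ_eq_sum]
  calc _ = exp (S / z) * (S * ∑ i ∈ range (m + 1), mellinBarnesTerm m z i S
          + z * S * ∑ i ∈ range (m + 1), -(i + 1) * mellinBarnesTerm m z i S / S
          + (m + 1) * z * ∑ i ∈ range (m + 1), mellinBarnesTerm m z i S) := by
        push_cast
        field_simp [hz.ne]
    _ = exp (S / z) := by rw [mellinBarnesTerm_sum_telescope m z hS.ne', mul_one]
end

section
/- In the additive monoid ℤ³, let M be the submonoid generated by a = (1,−1,0) and b = (0,1,0). Let A = M + ℕ·(1,0,−1) + ℕ·(0,−1,1) and B = M + ℕ·(0,1,−1) + ℕ·(0,0,1) (sums of submonoids inside ℤ³). Then A ∩ B = M + ℕ·(1,0,−1) + ℕ·(0,0,1). -/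
lemma mem_sup3 {a b c d v : ℤ × ℤ × ℤ} :
    v ∈ (AddSubmonoid.closure {a, b} ⊔ AddSubmonoid.closure {c} ⊔ AddSubmonoid.closure {d}) ↔
      ∃ p q r s : ℕ, p • a + q • b + r • c + s • d = v := by
  have h : ({a, b} : Set (ℤ × ℤ × ℤ)) = {a} ∪ {b} := rfl
  rw [h, AddSubmonoid.closure_union]
  simp only [AddSubmonoid.mem_sup, AddSubmonoid.mem_closure_singleton]
  constructor
  · rintro ⟨y, ⟨y1, ⟨y2, ⟨p, hp⟩, z1, ⟨q, hq⟩, h1⟩, z2, ⟨r, hr⟩, h2⟩, z3, ⟨s, hs⟩, h3⟩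
    subst hp hq hr hs h1 h2 h3
    exact ⟨p, q, r, s, rfl⟩
  · rintro ⟨p, q, r, s, rfl⟩
    exact ⟨_, ⟨_, ⟨_, ⟨p, rfl⟩, _, ⟨q, rfl⟩, rfl⟩, _, ⟨r, rfl⟩, rfl⟩, _, ⟨s, rfl⟩, rfl⟩

lemma memA {v : ℤ × ℤ × ℤ} :
    v ∈ (AddSubmonoid.closure {((1:ℤ),(-1:ℤ),(0:ℤ)), ((0:ℤ),(1:ℤ),(0:ℤ))} ⊔
        AddSubmonoid.closure {((1:ℤ),(0:ℤ),(-1:ℤ))} ⊔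
        AddSubmonoid.closure {((0:ℤ),(-1:ℤ),(1:ℤ))}) ↔
      0 ≤ v.1 ∧ 0 ≤ v.1 + v.2.2 ∧ 0 ≤ v.1 + v.2.1 + v.2.2 := by
  obtain ⟨x, y, z⟩ := v
  rw [mem_sup3]
  simp only [Prod.smul_mk, smul_eq_mul, nsmul_eq_mul, Prod.mk_add_mk, Prod.mk.injEq,
    mul_one, mul_neg, mul_zero]
  constructor
  · rintro ⟨p, q, r, s, h⟩; omega
  · rintro ⟨hx, hxz, hxyz⟩
    exact ⟨(x + min z 0).toNat, (x + y + z).toNat, (-z).toNat, z.toNat, by omega, by omega, by omega⟩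

lemma memB {v : ℤ × ℤ × ℤ} :
    v ∈ (AddSubmonoid.closure {((1:ℤ),(-1:ℤ),(0:ℤ)), ((0:ℤ),(1:ℤ),(0:ℤ))} ⊔
        AddSubmonoid.closure {((0:ℤ),(1:ℤ),(-1:ℤ))} ⊔
        AddSubmonoid.closure {((0:ℤ),(0:ℤ),(1:ℤ))}) ↔
      0 ≤ v.1 ∧ 0 ≤ v.1 + v.2.1 ∧ 0 ≤ v.1 + v.2.1 + v.2.2 := by
  obtain ⟨x, y, z⟩ := v
  rw [mem_sup3]
  simp only [Prod.smul_mk, smul_eq_mul, nsmul_eq_mul, Prod.mk_add_mk, Prod.mk.injEq,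
    mul_one, mul_neg, mul_zero]
  constructor
  · rintro ⟨p, q, r, s, h⟩; omega
  · rintro ⟨hx, hxy, hxyz⟩
    exact ⟨x.toNat, (x + y + min z 0).toNat, (-z).toNat, z.toNat, by omega, by omega, by omega⟩

lemma memC {v : ℤ × ℤ × ℤ} :
    v ∈ (AddSubmonoid.closure {((1:ℤ),(-1:ℤ),(0:ℤ)), ((0:ℤ),(1:ℤ),(0:ℤ))} ⊔
        AddSubmonoid.closure {((1:ℤ),(0:ℤ),(-1:ℤ))} ⊔
        AddSubmonoid.closure {((0:ℤ),(0:ℤ),(1:ℤ))}) ↔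
      0 ≤ v.1 ∧ 0 ≤ v.1 + v.2.2 ∧ 0 ≤ v.1 + v.2.1 ∧ 0 ≤ v.1 + v.2.1 + v.2.2 := by
  obtain ⟨x, y, z⟩ := v
  rw [mem_sup3]
  simp only [Prod.smul_mk, smul_eq_mul, nsmul_eq_mul, Prod.mk_add_mk, Prod.mk.injEq,
    mul_one, mul_neg, mul_zero]
  constructor
  · rintro ⟨p, q, r, s, h⟩; omega
  · rintro ⟨hx, hxz, hxy, hxyz⟩
    exact ⟨(x + min z 0).toNat, (x + y + min z 0).toNat, (-z).toNat, (z + (-z).toNat).toNat,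
      by omega, by omega, by omega⟩

theorem dual_GIT_chamber_intersection :
    (AddSubmonoid.closure {((1 : ℤ), (-1 : ℤ), (0 : ℤ)), ((0 : ℤ), (1 : ℤ), (0 : ℤ))} ⊔
        AddSubmonoid.closure {((1 : ℤ), (0 : ℤ), (-1 : ℤ))} ⊔
        AddSubmonoid.closure {((0 : ℤ), (-1 : ℤ), (1 : ℤ))}) ⊓
      (AddSubmonoid.closure {((1 : ℤ), (-1 : ℤ), (0 : ℤ)), ((0 : ℤ), (1 : ℤ), (0 : ℤ))} ⊔
        AddSubmonoid.closure {((0 : ℤ), (1 : ℤ), (-1 : ℤ))} ⊔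
        AddSubmonoid.closure {((0 : ℤ), (0 : ℤ), (1 : ℤ))}) =
    AddSubmonoid.closure {((1 : ℤ), (-1 : ℤ), (0 : ℤ)), ((0 : ℤ), (1 : ℤ), (0 : ℤ))} ⊔
      AddSubmonoid.closure {((1 : ℤ), (0 : ℤ), (-1 : ℤ))} ⊔
      AddSubmonoid.closure {((0 : ℤ), (0 : ℤ), (1 : ℤ))} := by
  ext v
  rw [AddSubmonoid.mem_inf, memA, memB, memC]
  omega
end
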